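/- Let p > 0, v > 0, s > 0, f(b) = b^p, a(b) = f(b)/(f(b)+s), u(b) = (v-b)·a(b). If b ∈ (0, v) satisfies u'(b) = 0, then b = v / (1 + (1/p)·(1/(1 - a(b)))). -/

import Mathlib

/-! The weight share `a(b) = bᵖ / (bᵖ + s)` satisfies the logistic equation `a' = (p / b) a (1 - a)`.
Hence `u' = -a + (v - b) a'` vanishes exactly when `b = (v - b) p (1 - a)`, which rearranges
to the stated formula. -/

theorem HasDerivAt.div_add_const_self {g : ℝ → ℝ} {g' x : ℝ} (s : ℝ) (hg : HasDerivAt g g' x)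
    (hx : g x + s ≠ 0) :
    HasDerivAt (fun y => g y / (g y + s)) (g' * s / (g x + s) ^ 2) x :=
  (hg.div (hg.add_const s) hx).congr_deriv (by ring)

theorem hasDerivAt_rpow_div_rpow_add {p s x : ℝ} (hx : 0 < x) (hs : 0 ≤ s) :
    HasDerivAt (fun y => y ^ p / (y ^ p + s))
      (p / x * (x ^ p / (x ^ p + s)) * (1 - x ^ p / (x ^ p + s))) x := by
  have hxp : 0 < x ^ p := Real.rpow_pos_of_pos hx p
  have hpow : x ^ (p - 1) = x ^ p / x := by rw [Real.rpow_sub_one hx.ne']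
  convert (Real.hasDerivAt_rpow_const (p := p) (Or.inl hx.ne')).div_add_const_self s
    (by positivity) using 1
  rw [hpow]
  field_simp
  ring

theorem eq_div_one_add_of_share_eq {p v b a : ℝ} (hb : b ≠ 0) (hv : v ≠ 0) (ha : a ≠ 0)
    (h : a = (v - b) * (p / b * a * (1 - a))) :
    b = v / (1 + 1 / p * (1 / (1 - a))) := by
  have hlin : b = (v - b) * p * (1 - a) := by field_simp at h; exact h
  have hp : p ≠ 0 := by rintro rfl; simp [hb] at hlin
  have h1a : 1 - a ≠ 0 := by intro h0; simp [h0, hb] at hlin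
  have hmul : b * (1 + 1 / p * (1 / (1 - a))) = v := by
    field_simp
    linear_combination hlin
  exact eq_div_of_mul_eq (fun h0 => hv (by rw [← hmul, h0, mul_zero])) hmul

theorem pow_equilibrium_char_general (p v s : ℝ) (hs : 0 < s)
    (f : ℝ → ℝ) (hf : ∀ b, f b = b ^ p)
    (a : ℝ → ℝ) (ha : ∀ b, a b = f b / (f b + s))
    (u : ℝ → ℝ) (hu : ∀ b, u b = (v - b) * a b)
    (b : ℝ) (hb : b ∈ Set.Ioo 0 v) (hcrit : deriv u b = 0) :
    b = v / (1 + (1 / p) * (1 / (1 - a b))) := by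
  obtain ⟨hb0, hbv⟩ := hb
  have ha_eq : a = fun x => x ^ p / (x ^ p + s) := funext fun x => by rw [ha, hf]
  have hab : a b ≠ 0 := by
    rw [ha_eq]
    have := Real.rpow_pos_of_pos hb0 p
    positivity
  have hda : HasDerivAt a (p / b * a b * (1 - a b)) b := by
    rw [ha_eq]; exact hasDerivAt_rpow_div_rpow_add hb0 hs.le
  have hdu : HasDerivAt u (-1 * a b + (v - b) * (p / b * a b * (1 - a b))) b := by
    rw [show u = fun x => (v - x) * a x from funext hu]
    exact (((hasDerivAt_id b).const_sub v).mul hda).congr_deriv (by simp)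
  rw [hdu.deriv] at hcrit
  exact eq_div_one_add_of_share_eq hb0.ne' (hb0.trans hbv).ne' hab (by linear_combination -hcrit)

theorem pow_equilibrium_char (p v s : ℝ) (hp : 0 < p) (hv : 0 < v) (hs : 0 < s)
    (f : ℝ → ℝ) (hf : ∀ b, f b = b ^ p)
    (a : ℝ → ℝ) (ha : ∀ b, a b = f b / (f b + s))
    (u : ℝ → ℝ) (hu : ∀ b, u b = (v - b) * a b)
    (b : ℝ) (hb : b ∈ Set.Ioo 0 v) (hcrit : deriv u b = 0) :
    b = v / (1 + (1 / p) * (1 / (1 - a b))) :=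
  pow_equilibrium_char_general p v s hs f hf a ha u hu b hb hcrit
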